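/- Let N, m be natural numbers, c : Fin (N+1) → EuclideanSpace ℝ (Fin m), and A : Fin (N+1) → Fin (N+1) → Matrix (Fin m) (Fin m) ℝ such that A j n = 0 whenever j > n + 1 (one-step residual structure), and A n n is invertible for every n. Suppose λ : Fin (N+1) → EuclideanSpace ℝ (Fin m) satisfies λ_N = ((A N N)ᵀ)⁻¹ *ᵥ c_N and, for every n < N, λ_n = ((A n n)ᵀ)⁻¹ *ᵥ (c_n - (A (n+1) n)ᵀ *ᵥ λ_{n+1}). Then λ solves the adjoint equations: for every n, c_n = ∑_{j=n}^N (A j n)ᵀ *ᵥ λ_j. -/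

import Mathlib

/-!
Multiplying the recursion for `λₙ` by `(A n n)ᵀ` gives
`cₙ = (A n n)ᵀ λₙ + (A (n+1) n)ᵀ λ_{n+1}`, and by the one-step structure these are the only
nonzero terms of the adjoint sum `∑_{j ≥ n} (A j n)ᵀ λ_j`.
-/

open Finset

open Matrix in
theorem Matrix.mulVec_nonsing_inv_mulVec_of_isUnit {n α : Type*} [Fintype n] [DecidableEq n]
    [CommRing α] {A : Matrix n n α} (hA : IsUnit A) (v : n → α) : A *ᵥ (A⁻¹ *ᵥ v) = v := by
  rw [mulVec_mulVec, mul_nonsing_inv _ ((isUnit_iff_isUnit_det A).mp hA), one_mulVec]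

theorem Fin.sum_Ici_eq_add_of_forall_succ_lt {M : Type*} [AddCommMonoid M] {N : ℕ}
    (f : Fin (N + 1) → M) (n : Fin (N + 1)) (hn : (n : ℕ) < N)
    (hf : ∀ j : Fin (N + 1), (n : ℕ) + 1 < j → f j = 0) :
    ∑ j ∈ Ici n, f j = f n + f ⟨n + 1, Nat.succ_lt_succ hn⟩ :=
  sum_eq_add_of_mem _ _ (by simp) (by simp [Fin.le_def]) (by simp [Fin.ext_iff])
    fun j hj hne => by
      simp only [mem_Ici, Fin.le_def, ne_eq, Fin.ext_iff] at hj hne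
      exact hf j (by omega)

theorem Fin.sum_Ici_last {M : Type*} [AddCommMonoid M] {N : ℕ} (f : Fin (N + 1) → M) :
    ∑ j ∈ Ici (Fin.last N), f j = f (Fin.last N) := by
  rw [← Fin.top_eq_last, Ici_top, sum_singleton]

/-- One-step adjoint recursion: with one-step residual structure
(`A j n = 0` for `j > n + 1`) and invertible diagonal Jacobians, the simplified
backward recursion `λₙ = ((A n n)ᵀ)⁻¹ (cₙ - (A (n+1) n)ᵀ λ_{n+1})` produces
multipliers solving the adjoint equations `cₙ = ∑_{j ≥ n} (A j n)ᵀ λ_j`. -/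
theorem one_step_backward_recursion_solves_adjoint {N m : ℕ}
    (c : Fin (N + 1) → EuclideanSpace ℝ (Fin m))
    (A : Fin (N + 1) → Fin (N + 1) → Matrix (Fin m) (Fin m) ℝ)
    (hA0 : ∀ j n : Fin (N + 1), (n : ℕ) + 1 < (j : ℕ) → A j n = 0)
    (hA : ∀ n, IsUnit (A n n))
    (lam : Fin (N + 1) → EuclideanSpace ℝ (Fin m))
    (hlamN : lam (Fin.last N) =
      (((A (Fin.last N) (Fin.last N)).transpose)⁻¹).mulVec (c (Fin.last N)))
    (hlam : ∀ n : Fin (N + 1), ∀ h : (n : ℕ) < N,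
      lam n = (((A n n).transpose)⁻¹).mulVec
        (c n - (id (WithLp.toLp 2 (((A ⟨(n : ℕ) + 1, by omega⟩ n).transpose).mulVec
          (lam ⟨(n : ℕ) + 1, by omega⟩))) : EuclideanSpace ℝ (Fin m)))) :
    ∀ n, c n = (∑ j ∈ Finset.Ici n,
      WithLp.toLp 2 (((A j n).transpose).mulVec (lam j)) : EuclideanSpace ℝ (Fin m)) := by
  intro n
  have cancel k :=
    Matrix.mulVec_nonsing_inv_mulVec_of_isUnit ((Matrix.isUnit_transpose _).2 (hA k))
  by_cases hn : (n : ℕ) < N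
  · rw [Fin.sum_Ici_eq_add_of_forall_succ_lt _ n hn fun j hj => by simp [hA0 j n hj],
      hlam n hn, cancel]
    simp
  · obtain rfl : n = Fin.last N := Fin.ext (by rw [Fin.val_last]; omega)
    rw [Fin.sum_Ici_last, hlamN, cancel]
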